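/- arXiv:2410.15354 — 4 statements merged into one kernel-verified Lean document; each statement's English description precedes it below -/
import Mathlib

section
/- The vector field X=(P,Q) with P(x,y) = (4x²−1)(y + a·y²) and Q(x,y) = (4y²−1)(−x + b·x²), for any real constants a, b, has integrating factor R(x,y) = 1/((4x²−1)(4y²−1)) on the open square Δ = (−1/2,1/2)²; i.e., ∂(PR)/∂x + ∂(QR)/∂y = 0 on Δ. -/
/-! On the square the factors `4x² - 1` and `4y² - 1` do not vanish, so `R` cancels them from `P`
and `Q`: near the point, `PR` does not depend on `x` and `QR` does not depend on `y`, and both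
partial derivatives vanish. -/

lemma deriv_mul_mul_one_div_mul_eq_zero {g : ℝ → ℝ} {x : ℝ} (hg : ContinuousAt g x)
    (hx : g x ≠ 0) (c d : ℝ) :
    deriv (fun s => g s * c * (1 / (g s * d))) x = 0 := by
  have hcancel : (fun s => g s * c * (1 / (g s * d))) =ᶠ[nhds x] fun _ => c / d := by
    filter_upwards [hg.eventually_ne hx] with s hs
    rw [one_div, mul_inv, mul_right_comm, mul_assoc, mul_assoc, mul_inv_cancel_left₀ hs, div_eq_inv_mul]
  rw [hcancel.deriv_eq, deriv_const]

lemma deriv_mul_mul_one_div_mul_eq_zero' {g : ℝ → ℝ} {x : ℝ} (hg : ContinuousAt g x)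
    (hx : g x ≠ 0) (c d : ℝ) :
    deriv (fun s => g s * c * (1 / (d * g s))) x = 0 := by
  simp_rw [mul_comm d]
  exact deriv_mul_mul_one_div_mul_eq_zero hg hx c d

lemma four_mul_sq_sub_one_ne_zero {x : ℝ} (h₁ : -(1 / 2) < x) (h₂ : x < 1 / 2) :
    4 * x ^ 2 - 1 ≠ 0 := by
  nlinarith

/-- The vector field `P(x,y) = (4x²-1)(y + a y²)`, `Q(x,y) = (4y²-1)(-x + b x²)`
has integrating factor `R(x,y) = 1/((4x²-1)(4y²-1))` on the open square
`Δ = (-1/2,1/2)²`: `∂(PR)/∂x + ∂(QR)/∂y = 0` on `Δ`. -/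
theorem stmt9 (a b : ℝ) :
    ∀ x y : ℝ, -(1/2) < x → x < 1/2 → -(1/2) < y → y < 1/2 →
      deriv (fun s : ℝ =>
          (4 * s ^ 2 - 1) * (y + a * y ^ 2) *
            (1 / ((4 * s ^ 2 - 1) * (4 * y ^ 2 - 1)))) x +
        deriv (fun s : ℝ =>
          (4 * s ^ 2 - 1) * (-x + b * x ^ 2) *
            (1 / ((4 * x ^ 2 - 1) * (4 * s ^ 2 - 1)))) y = 0 := by
  intro x y hx₁ hx₂ hy₁ hy₂
  have hcont : Continuous fun s : ℝ => 4 * s ^ 2 - 1 := by fun_prop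
  rw [deriv_mul_mul_one_div_mul_eq_zero hcont.continuousAt
      (four_mul_sq_sub_one_ne_zero hx₁ hx₂),
    deriv_mul_mul_one_div_mul_eq_zero' hcont.continuousAt
      (four_mul_sq_sub_one_ne_zero hy₁ hy₂), add_zero]
end

section
/- The vector field X=(P,Q) with P(x,y) = (4x²−1)(y + a·xy + b·y²) and Q(x,y) = (4y²−1)(−x − a·x² − b·xy), for real constants a, b, admits the integrating factor R(x,y) = 1/(a·x + b·y + 1) on a neighborhood of the origin; i.e., ∂(PR)/∂x + ∂(QR)/∂y = 0 wherever a·x + b·y + 1 ≠ 0. -/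
/-! Both factors of the integrating factor cancel: `y + a x y + b y² = y (a x + b y + 1)` and
`-x - a x² - b x y = -x (a x + b y + 1)`, so near any point where `a x + b y + 1 ≠ 0` the
field `R X` is `((4x² - 1) y, -(4y² - 1) x)`, whose divergence is `8xy - 8xy = 0`. -/

theorem deriv_mul_one_div_eq_of_eq_mul {𝕜 : Type*} [NontriviallyNormedField 𝕜]
    {f g h : 𝕜 → 𝕜} {x : 𝕜} (hh : ContinuousAt h x) (hx : h x ≠ 0)
    (hg : ∀ s, g s = f s * h s) :
    deriv (fun s => g s * (1 / h s)) x = deriv f x := by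
  refine Filter.EventuallyEq.deriv_eq ?_
  filter_upwards [hh.eventually_ne hx] with s hs
  rw [hg, mul_one_div, mul_div_cancel_right₀ _ hs]

theorem deriv_four_mul_sq_sub_one_mul {𝕜 : Type*} [NontriviallyNormedField 𝕜] (c x : 𝕜) :
    deriv (fun s => (4 * s ^ 2 - 1) * c) x = 8 * x * c := by
  have := (((hasDerivAt_pow 2 x).const_mul 4).sub_const 1).mul_const c
  rw [this.deriv]
  ring

/-- The vector field `P(x,y) = (4x²-1)(y + a xy + b y²)`,
`Q(x,y) = (4y²-1)(-x - a x² - b xy)` admits the integrating factor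
`R(x,y) = 1/(a x + b y + 1)` wherever `a x + b y + 1 ≠ 0`:
`∂(PR)/∂x + ∂(QR)/∂y = 0` there. -/
theorem stmt10 (a b : ℝ) :
    ∀ x y : ℝ, a * x + b * y + 1 ≠ 0 →
      deriv (fun s : ℝ =>
          (4 * s ^ 2 - 1) * (y + a * s * y + b * y ^ 2) *
            (1 / (a * s + b * y + 1))) x +
        deriv (fun s : ℝ =>
          (4 * s ^ 2 - 1) * (-x - a * x ^ 2 - b * x * s) *
            (1 / (a * x + b * s + 1))) y = 0 := by
  intro x y h
  rw [deriv_mul_one_div_eq_of_eq_mul (f := fun s => (4 * s ^ 2 - 1) * y)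
      (h := fun s => a * s + b * y + 1) (by fun_prop) h (fun s => by ring),
    deriv_mul_one_div_eq_of_eq_mul (f := fun s => (4 * s ^ 2 - 1) * -x)
      (h := fun s => a * x + b * s + 1) (by fun_prop) h (fun s => by ring),
    deriv_four_mul_sq_sub_one_mul, deriv_four_mul_sq_sub_one_mul]
  ring
end

section
/- The vector field X=(P,Q) with P(x,y) = (4x²−1)(y + a·x² + b·xy + a·y²) and Q(x,y) = (4y²−1)(−x + c·x² − 2a·xy + c·y²), where b = −2c (i.e., condition D₇: a₂₀=a₀₂=−b₁₁/2 and b₂₀=b₀₂=−a₁₁/2), admits the integrating factor R(x,y)=1/((4x²−1)²(4y²−1)²) on Δ=(−1/2,1/2)²: ∂(PR)/∂x + ∂(QR)/∂y = 0 on Δ. -/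
/-!
Writing `u = 4x² - 1`, `v = 4y² - 1` and `P = u F`, `Q = v G`, the factor `R = 1/(u²v²)` gives
`PR = F/(u v²)` and `QR = G/(u² v)`, so `u²v² · div(RX) = (u F_x - 8x F) + (v G_y - 8y G)`.
Under `D₇` both `u F_x + v G_y` and `8x F + 8y G` equal `4(x² - y²)(a y - b x)`.
-/

lemma hasDerivAt_quadratic (α β γ x : ℝ) :
    HasDerivAt (fun s : ℝ => α + β * s + γ * s ^ 2) (β + 2 * γ * x) x := by
  have h := ((hasDerivAt_id x).const_mul β).const_add α |>.add ((hasDerivAt_pow 2 x).const_mul γ)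
  exact h.congr_deriv (by simp; ring)

lemma hasDerivAt_four_mul_sq_sub_one (x : ℝ) :
    HasDerivAt (fun s : ℝ => 4 * s ^ 2 - 1) (8 * x) x := by
  convert hasDerivAt_quadratic (-1) 0 4 x using 1
  · funext s; ring
  · ring

section QuotientByFactor

variable {q F : ℝ → ℝ} {q' F' c x : ℝ}

/-- The factor `q` cancels (also, by the junk value `1/0 = 0`, where `q` vanishes), leaving
the quotient rule for `F / (q c)`. -/
lemma HasDerivAt.mul_one_div_sq_mul_const (hq : HasDerivAt q q' x) (hF : HasDerivAt F F' x)
    (hqx : q x ≠ 0) (hc : c ≠ 0) :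
    HasDerivAt (fun s => q s * F s * (1 / (q s ^ 2 * c)))
      ((F' * q x - F x * q') / (q x ^ 2 * c)) x := by
  have hfun : (fun s => q s * F s * (1 / (q s ^ 2 * c))) = fun s => F s / (q s * c) := by
    funext s
    rcases eq_or_ne (q s) 0 with h | h
    · simp [h]
    · field_simp
  rw [hfun]
  exact (hF.div (hq.mul_const c) (mul_ne_zero hqx hc)).congr_deriv (by field_simp)

lemma HasDerivAt.mul_one_div_const_mul_sq (hq : HasDerivAt q q' x) (hF : HasDerivAt F F' x)
    (hqx : q x ≠ 0) (hc : c ≠ 0) :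
    HasDerivAt (fun s => q s * F s * (1 / (c * q s ^ 2)))
      ((F' * q x - F x * q') / (q x ^ 2 * c)) x := by
  simpa only [mul_comm c] using hq.mul_one_div_sq_mul_const hF hqx hc

end QuotientByFactor

/-- The vector field of center condition `D₇`:
`P(x,y) = (4x²-1)(y - (b/2)x² + a xy - (b/2)y²)`,
`Q(x,y) = (4y²-1)(-x - (a/2)x² + b xy - (a/2)y²)`, admits the integrating
factor `R(x,y) = 1/((4x²-1)²(4y²-1)²)` on `Δ = (-1/2,1/2)²`:
`∂(PR)/∂x + ∂(QR)/∂y = 0` on `Δ`. -/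
theorem stmt11 (a b : ℝ) :
    ∀ x y : ℝ, -(1/2) < x → x < 1/2 → -(1/2) < y → y < 1/2 →
      deriv (fun s : ℝ =>
          (4 * s ^ 2 - 1) * (y - (b / 2) * s ^ 2 + a * s * y - (b / 2) * y ^ 2) *
            (1 / ((4 * s ^ 2 - 1) ^ 2 * (4 * y ^ 2 - 1) ^ 2))) x +
        deriv (fun s : ℝ =>
          (4 * s ^ 2 - 1) * (-x - (a / 2) * x ^ 2 + b * x * s - (a / 2) * s ^ 2) *
            (1 / ((4 * x ^ 2 - 1) ^ 2 * (4 * s ^ 2 - 1) ^ 2))) y = 0 := by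
  intro x y hx₁ hx₂ hy₁ hy₂
  have hu := four_mul_sq_sub_one_ne_zero hx₁ hx₂
  have hv := four_mul_sq_sub_one_ne_zero hy₁ hy₂
  have hF : HasDerivAt (fun s => y - (b / 2) * s ^ 2 + a * s * y - (b / 2) * y ^ 2)
      (a * y - b * x) x := by
    convert hasDerivAt_quadratic (y - (b / 2) * y ^ 2) (a * y) (-(b / 2)) x using 1
    · funext s; ring
    · ring
  have hG : HasDerivAt (fun s => -x - (a / 2) * x ^ 2 + b * x * s - (a / 2) * s ^ 2)
      (b * x - a * y) y := by
    convert hasDerivAt_quadratic (-x - (a / 2) * x ^ 2) (b * x) (-(a / 2)) y using 1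
    · funext s; ring
    · ring
  rw [((hasDerivAt_four_mul_sq_sub_one x).mul_one_div_sq_mul_const hF hu (pow_ne_zero 2 hv)).deriv,
    ((hasDerivAt_four_mul_sq_sub_one y).mul_one_div_const_mul_sq hG hv (pow_ne_zero 2 hu)).deriv,
    mul_comm ((4 * y ^ 2 - 1) ^ 2), ← add_div, div_eq_zero_iff]
  left
  ring
end

section
/- Suppose a planar C¹ vector field X has two nondegenerate singularities p ≠ q lying on a line ℓ with unit normal n, and suppose ⟨X(w), n⟩ ≠ 0 for all w on the open segment between p and q. If closed orbits surround p with counterclockwise orientation in a punctured neighborhood of p, and closed orbits surround q in a punctured neighborhood of q, then the orbits around q are oriented clockwise; more precisely, the sign of ⟨X(w), n⟩ for w on the segment near p is determined by the rotation direction at p, forcing opposite rotation directions at p and q. -/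
/-- The planar cross product `u × v = u₁v₂ - u₂v₁`. -/
def cross2 (u v : ℝ × ℝ) : ℝ := u.1 * v.2 - u.2 * v.1

/-- `γ` is a periodic solution of the vector field `X` with period `T`. -/
def IsPeriodicOrbit (X : ℝ × ℝ → ℝ × ℝ) (γ : ℝ → ℝ × ℝ) (T : ℝ) : Prop :=
  0 < T ∧ (∀ t : ℝ, HasDerivAt γ (X (γ t)) t) ∧ (∀ t : ℝ, γ (t + T) = γ t)

/-- The determinant of the Jacobian of `X` at `p`. -/
noncomputable def jacDet2 (X : ℝ × ℝ → ℝ × ℝ) (p : ℝ × ℝ) : ℝ :=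
  (fderiv ℝ X p (1, 0)).1 * (fderiv ℝ X p (0, 1)).2 -
    (fderiv ℝ X p (0, 1)).1 * (fderiv ℝ X p (1, 0)).2

/-! At a nondegenerate singularity `z` with linear part `A`, `tr A ≠ 0`, the quadratic form
`V v = det A ⬝ |v|² + |(tr A - A) v|²` is a strict Lyapunov function for the linearisation: by
Cayley–Hamilton its derivative along `A v` is `tr A ⬝ det A ⬝ |v|²`. So no closed orbit lives in a
small punctured ball around `z`, and the traces at `p` and `q` vanish. With zero trace,
`c ⬝ cross2 v (A v)` is positive definite (`c = ∂₁X₂(z)`), so `cross2 (w - z) (X w)` has the sign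
of `c` near `z`; counterclockwise orbits give `c > 0` at `p`. Then `cross2 (q - p) (X w)` is
positive for `w` on the segment near `p`, cannot change sign on the segment (no contact), and near
`q` this makes `cross2 (w - q) (X w)` negative, so `c < 0` at `q`. -/

open Filter Topology Metric

theorem HasFDerivAt.eventually_pos_of_coercive {E F : Type*} [NormedAddCommGroup E]
    [NormedSpace ℝ E] [NormedAddCommGroup F] [NormedSpace ℝ F] {X : E → F} {A : E →L[ℝ] F} {z : E}
    (hX : HasFDerivAt X A z) (hz : X z = 0) (B : E →L[ℝ] F →L[ℝ] ℝ) {m : ℝ} (hm : 0 < m)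
    (hB : ∀ v, m * ‖v‖ ^ 2 ≤ B v (A v)) :
    ∀ᶠ w in 𝓝[≠] z, 0 < B (w - z) (X w) := by
  have hη : 0 < m / (2 * (‖B‖ + 1)) := by positivity
  filter_upwards [nhdsWithin_le_nhds (hX.isLittleO.def hη), self_mem_nhdsWithin]
    with w hR hw
  set v := w - z
  set R := X w - A v
  rw [hz, sub_zero] at hR
  have hv : 0 < ‖v‖ := norm_pos_iff.2 (sub_ne_zero.2 hw)
  have hBR : |B v R| ≤ m / 2 * ‖v‖ ^ 2 :=
    calc |B v R| ≤ ‖B‖ * ‖v‖ * ‖R‖ := B.le_opNorm₂ v R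
      _ ≤ ‖B‖ * ‖v‖ * (m / (2 * (‖B‖ + 1)) * ‖v‖) := by gcongr
      _ ≤ m / 2 * ‖v‖ ^ 2 := by
        rw [show ‖B‖ * ‖v‖ * (m / (2 * (‖B‖ + 1)) * ‖v‖)
          = ‖B‖ / (‖B‖ + 1) * (m / 2 * ‖v‖ ^ 2) by field_simp]
        exact mul_le_of_le_one_left (by positivity) ((div_le_one (by positivity)).2 (by simp))
  have hsplit : B v (X w) = B v (A v) + B v R := by simp [R]
  have : 0 < m / 2 * ‖v‖ ^ 2 := by positivity
  linarith [hB v, abs_le.1 hBR]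

def trace2 (A : ℝ × ℝ →L[ℝ] ℝ × ℝ) : ℝ := (A (1, 0)).1 + (A (0, 1)).2

def det2 (A : ℝ × ℝ →L[ℝ] ℝ × ℝ) : ℝ := (A (1, 0)).1 * (A (0, 1)).2 - (A (0, 1)).1 * (A (1, 0)).2

lemma ContinuousLinearMap.apply_prod_eq (A : ℝ × ℝ →L[ℝ] ℝ × ℝ) (v : ℝ × ℝ) :
    A v = ((A (1, 0)).1 * v.1 + (A (0, 1)).1 * v.2, (A (1, 0)).2 * v.1 + (A (0, 1)).2 * v.2) := by
  have hv : v = v.1 • ((1, 0) : ℝ × ℝ) + v.2 • ((0, 1) : ℝ × ℝ) := by ext <;> simp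
  conv_lhs => rw [hv, map_add, map_smul, map_smul]
  ext <;> simp [mul_comm]

lemma Prod.norm_sq_le (v : ℝ × ℝ) : ‖v‖ ^ 2 ≤ v.1 ^ 2 + v.2 ^ 2 := by
  rw [Prod.norm_def, Real.norm_eq_abs, Real.norm_eq_abs]
  rcases le_total |v.1| |v.2| with h | h
  · rw [max_eq_right h, sq_abs]; nlinarith [sq_nonneg v.1]
  · rw [max_eq_left h, sq_abs]; nlinarith [sq_nonneg v.2]

noncomputable def cross2L : ℝ × ℝ →L[ℝ] ℝ × ℝ →L[ℝ] ℝ :=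
  (ContinuousLinearMap.mul ℝ ℝ).bilinearComp (.fst ℝ ℝ ℝ) (.snd ℝ ℝ ℝ) -
    (ContinuousLinearMap.mul ℝ ℝ).bilinearComp (.snd ℝ ℝ ℝ) (.fst ℝ ℝ ℝ)

@[simp] lemma cross2L_apply (u v : ℝ × ℝ) : cross2L u v = cross2 u v := rfl

noncomputable def dot2L : ℝ × ℝ →L[ℝ] ℝ × ℝ →L[ℝ] ℝ :=
  (ContinuousLinearMap.mul ℝ ℝ).bilinearComp (.fst ℝ ℝ ℝ) (.fst ℝ ℝ ℝ) +
    (ContinuousLinearMap.mul ℝ ℝ).bilinearComp (.snd ℝ ℝ ℝ) (.snd ℝ ℝ ℝ)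

@[simp] lemma dot2L_apply (u v : ℝ × ℝ) : dot2L u v = u.1 * v.1 + u.2 * v.2 := rfl

-- The polar form of the `V` above; `tr A - A` is the adjugate of `A`.
noncomputable def lyapunovForm (A : ℝ × ℝ →L[ℝ] ℝ × ℝ) : ℝ × ℝ →L[ℝ] ℝ × ℝ →L[ℝ] ℝ :=
  det2 A • dot2L +
    dot2L.bilinearComp (trace2 A • ContinuousLinearMap.id ℝ _ - A)
      (trace2 A • ContinuousLinearMap.id ℝ _ - A)

lemma lyapunovForm_comm (A : ℝ × ℝ →L[ℝ] ℝ × ℝ) (u v : ℝ × ℝ) :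
    lyapunovForm A u v = lyapunovForm A v u := by
  simp only [lyapunovForm, add_apply, smul_apply, dot2L_apply, smul_eq_mul,
    ContinuousLinearMap.bilinearComp_apply]
  ring

lemma ContinuousLinearMap.apply_apply_eq_trace2_det2 (A : ℝ × ℝ →L[ℝ] ℝ × ℝ) (v : ℝ × ℝ) :
    A (A v) = trace2 A • A v - det2 A • v := by
  rw [A.apply_prod_eq (A v), A.apply_prod_eq v]
  ext <;> simp only [trace2, det2, Prod.smul_mk, smul_eq_mul, Prod.fst_sub, Prod.snd_sub,
    Prod.smul_fst, Prod.smul_snd] <;> ring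

lemma lyapunovForm_apply_self_apply (A : ℝ × ℝ →L[ℝ] ℝ × ℝ) (v : ℝ × ℝ) :
    lyapunovForm A v (A v) = det2 A * trace2 A * (v.1 ^ 2 + v.2 ^ 2) := by
  simp only [lyapunovForm, add_apply, smul_apply, smul_eq_mul,
    ContinuousLinearMap.bilinearComp_apply, sub_apply, ContinuousLinearMap.id_apply, map_sub,
    map_smul, A.apply_apply_eq_trace2_det2, sub_sub_cancel, dot2L_apply]
  ring

lemma exists_coercive_cross2_of_trace2_eq_zero {A : ℝ × ℝ →L[ℝ] ℝ × ℝ} (htr : trace2 A = 0)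
    (hdet : 0 < det2 A) :
    ∃ m > 0, ∀ v, m * ‖v‖ ^ 2 ≤ ((A (1, 0)).2 • cross2L) v (A v) := by
  set a := (A (1, 0)).1
  set b := (A (0, 1)).1
  set c := (A (1, 0)).2
  set d := (A (0, 1)).2
  have hD : 0 < a * d - b * c := hdet
  have had : a + d = 0 := htr
  have hc : c ≠ 0 := by
    intro hc
    have hda : d = -a := by linear_combination had
    rw [hc, hda] at hD
    nlinarith [sq_nonneg a]
  have hform : ∀ v : ℝ × ℝ, ((A (1, 0)).2 • cross2L) v (A v)
      = (c * v.1 - a * v.2) ^ 2 + (a * d - b * c) * v.2 ^ 2 := by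
    intro v
    rw [smul_apply, smul_apply, cross2L_apply, A.apply_prod_eq v, cross2, smul_eq_mul]
    linear_combination (c * v.1 * v.2 - a * v.2 ^ 2) * had
  have hS : 0 < c ^ 2 + a ^ 2 + (a * d - b * c) := by positivity
  refine ⟨c ^ 2 * (a * d - b * c) / (c ^ 2 + a ^ 2 + (a * d - b * c)), by positivity, fun v => ?_⟩
  rw [hform]
  calc _ ≤ c ^ 2 * (a * d - b * c) / (c ^ 2 + a ^ 2 + (a * d - b * c)) * (v.1 ^ 2 + v.2 ^ 2) :=
        mul_le_mul_of_nonneg_left v.norm_sq_le (by positivity)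
    _ ≤ _ := by
        rw [div_mul_eq_mul_div, div_le_iff₀ hS]
        nlinarith [sq_nonneg (c ^ 2 * v.1 - a * c * v.2),
          sq_nonneg (a * c * v.1 - (a ^ 2 + (a * d - b * c)) * v.2)]

lemma IsPeriodicOrbit.exists_apply_nonpos {X : ℝ × ℝ → ℝ × ℝ} {γ : ℝ → ℝ × ℝ} {T : ℝ}
    (h : IsPeriodicOrbit X γ T) (B : ℝ × ℝ →L[ℝ] ℝ × ℝ →L[ℝ] ℝ) (hB : ∀ u v, B u v = B v u)
    (z : ℝ × ℝ) : ∃ t, B (γ t - z) (X (γ t)) ≤ 0 := by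
  obtain ⟨hT, hγ, hper⟩ := h
  by_contra! hpos
  have hderiv :
      ∀ t, HasDerivAt (fun s => B (γ s - z) (γ s - z)) (2 * B (γ t - z) (X (γ t))) t := by
    intro t
    have hγz := (hγ t).sub_const z
    refine (B.hasDerivAt_of_bilinear (fun _ => hγz) (fun _ => hγz)).congr_deriv ?_
    rw [hB (X (γ t))]
    ring
  have hmono := strictMono_of_hasDerivAt_pos hderiv fun t => by linarith [hpos t]
  have hγT : γ T = γ 0 := by simpa using hper 0
  simpa [hγT] using hmono hT

theorem trace2_eq_zero_of_periodicOrbit_near {X : ℝ × ℝ → ℝ × ℝ} {A : ℝ × ℝ →L[ℝ] ℝ × ℝ}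
    {z : ℝ × ℝ} (hX : HasFDerivAt X A z) (hz : X z = 0) (hdet : 0 < det2 A)
    (horb : ∀ ε > 0, ∃ γ T, IsPeriodicOrbit X γ T ∧ Set.range γ ⊆ ball z ε \ {z}) :
    trace2 A = 0 := by
  by_contra htr
  have hcoer : ∀ v, trace2 A ^ 2 * det2 A * ‖v‖ ^ 2 ≤ (trace2 A • lyapunovForm A) v (A v) := by
    intro v
    rw [smul_apply, smul_apply, lyapunovForm_apply_self_apply, smul_eq_mul]
    calc _ ≤ trace2 A ^ 2 * det2 A * (v.1 ^ 2 + v.2 ^ 2) :=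
          mul_le_mul_of_nonneg_left v.norm_sq_le (by positivity)
      _ = _ := by ring
  obtain ⟨ε, hε, hpos⟩ := nhdsWithin_basis_ball.eventually_iff.1 <|
    hX.eventually_pos_of_coercive hz _ (by positivity) hcoer
  obtain ⟨γ, T, hγ, hsub⟩ := horb ε hε
  obtain ⟨t, ht⟩ := hγ.exists_apply_nonpos (trace2 A • lyapunovForm A)
    (fun u v => by simp [lyapunovForm_comm A u v]) z
  exact ht.not_gt (hpos (hsub ⟨t, rfl⟩))

theorem eventually_pos_cross2_of_trace2_eq_zero {X : ℝ × ℝ → ℝ × ℝ} {A : ℝ × ℝ →L[ℝ] ℝ × ℝ}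
    {z : ℝ × ℝ} (hX : HasFDerivAt X A z) (hz : X z = 0) (hdet : 0 < det2 A)
    (htr : trace2 A = 0) :
    ∀ᶠ w in 𝓝[≠] z, 0 < (A (1, 0)).2 * cross2 (w - z) (X w) := by
  obtain ⟨m, hm, hcoer⟩ := exists_coercive_cross2_of_trace2_eq_zero htr hdet
  exact hX.eventually_pos_of_coercive hz _ hm hcoer

lemma cross2_smul_left (s : ℝ) (u v : ℝ × ℝ) : cross2 (s • u) v = s * cross2 u v := by
  simp only [cross2, Prod.smul_fst, Prod.smul_snd, smul_eq_mul]
  ring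

lemma cross2_ne_zero_of_dot_ne_zero {u n v : ℝ × ℝ} (hu : u ≠ 0)
    (hun : u.1 * n.1 + u.2 * n.2 = 0) (hv : v.1 * n.1 + v.2 * n.2 ≠ 0) : cross2 u v ≠ 0 := by
  intro huv
  unfold cross2 at huv
  have hu2 : u.1 ^ 2 + u.2 ^ 2 ≠ 0 := by
    contrapose! hu
    ext <;> simp <;> nlinarith [sq_nonneg u.1, sq_nonneg u.2]
  -- the planar identity `|u|² ⟨v, n⟩ = ⟨u, v⟩ ⟨u, n⟩ + cross2 u v ⬝ cross2 u n`
  have key : (u.1 ^ 2 + u.2 ^ 2) * (v.1 * n.1 + v.2 * n.2) = 0 := by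
    linear_combination (u.1 * v.1 + u.2 * v.2) * hun + (u.1 * n.2 - u.2 * n.1) * huv
  exact hv ((mul_eq_zero.1 key).resolve_left hu2)

lemma IsPreconnected.forall_pos_of_pos {α β : Type*} [TopologicalSpace α] [TopologicalSpace β]
    [LinearOrder β] [OrderClosedTopology β] [Zero β] {S : Set α} {f : α → β}
    (hS : IsPreconnected S) (hf : ContinuousOn f S) (hf0 : ∀ x ∈ S, f x ≠ 0) {y : α} (hy : y ∈ S)
    (hfy : 0 < f y) : ∀ x ∈ S, 0 < f x := by
  intro x hx
  by_contra! hfx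
  obtain ⟨w, hw, hfw⟩ := hS.intermediate_value hx hy hf ⟨hfx, hfy.le⟩
  exact hf0 w hw hfw

lemma tendsto_add_smul_nhdsNE (p : ℝ × ℝ) {u : ℝ × ℝ} (hu : u ≠ 0) (s₀ : ℝ) :
    Tendsto (fun s : ℝ => p + s • u) (𝓝[≠] s₀) (𝓝[≠] (p + s₀ • u)) :=
  tendsto_nhdsWithin_of_tendsto_nhds_of_eventually_within _
    ((Continuous.tendsto (by fun_prop) s₀).mono_left nhdsWithin_le_nhds)
    (eventually_nhdsWithin_of_forall fun _ hs =>
      (smul_left_injective ℝ hu).ne hs ∘ add_left_cancel)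

theorem frequently_cross2_neg_of_noContact {X : ℝ × ℝ → ℝ × ℝ} (hX : Continuous X)
    {p q n : ℝ × ℝ} (hpq : p ≠ q) (hperp : (q.1 - p.1) * n.1 + (q.2 - p.2) * n.2 = 0)
    (hnc : ∀ s ∈ Set.Ioo (0 : ℝ) 1,
      (X (p + s • (q - p))).1 * n.1 + (X (p + s • (q - p))).2 * n.2 ≠ 0)
    (hp : ∀ᶠ w in 𝓝[≠] p, 0 < cross2 (w - p) (X w)) :
    ∃ᶠ w in 𝓝[≠] q, cross2 (w - q) (X w) < 0 := by
  set u := q - p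
  have hu : u ≠ 0 := sub_ne_zero.2 hpq.symm
  have hF_cont : Continuous fun s : ℝ => cross2 u (X (p + s • u)) :=
    (cross2L u).continuous.comp (hX.comp (by fun_prop))
  have hF_ne : ∀ s ∈ Set.Ioo (0 : ℝ) 1, cross2 u (X (p + s • u)) ≠ 0 :=
    fun s hs => cross2_ne_zero_of_dot_ne_zero hu hperp (hnc s hs)
  have hstart : ∀ᶠ s in 𝓝[>] 0, s ∈ Set.Ioo (0 : ℝ) 1 ∧ 0 < cross2 u (X (p + s • u)) := by
    have h := (tendsto_add_smul_nhdsNE p hu 0).eventually (by rwa [zero_smul, add_zero])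
    filter_upwards [Ioo_mem_nhdsGT zero_lt_one, nhdsWithin_mono _ (fun s hs => ne_of_gt hs) h]
      with s hs hpos
    rw [add_sub_cancel_left, cross2_smul_left] at hpos
    exact ⟨hs, pos_of_mul_pos_right hpos hs.1.le⟩
  obtain ⟨s₁, hs₁, hFs₁⟩ := hstart.exists
  have hF_pos := isPreconnected_Ioo.forall_pos_of_pos hF_cont.continuousOn hF_ne hs₁ hFs₁
  have hend : ∀ᶠ s in 𝓝[<] (1 : ℝ), cross2 (p + s • u - q) (X (p + s • u)) < 0 := by
    filter_upwards [Ioo_mem_nhdsLT zero_lt_one] with s hs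
    rw [show p + s • u - q = (s - 1) • u by simp [u, sub_smul]; abel, cross2_smul_left]
    exact mul_neg_of_neg_of_pos (by linarith [hs.2]) (hF_pos s hs)
  have h := (tendsto_add_smul_nhdsNE p hu 1).mono_left (nhdsWithin_mono _ fun s hs => ne_of_lt hs)
  rw [one_smul, add_sub_cancel] at h
  exact h.frequently hend.frequently

theorem stmt19_general (X : ℝ × ℝ → ℝ × ℝ) (hX : ContDiff ℝ 1 X)
    (p q : ℝ × ℝ) (hpq : p ≠ q)
    (hXp : X p = 0) (hXq : X q = 0)
    (hdp : 0 < jacDet2 X p) (hdq : 0 < jacDet2 X q)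
    (n : ℝ × ℝ)
    (hperp : (q.1 - p.1) * n.1 + (q.2 - p.2) * n.2 = 0)
    (hnc : ∀ s : ℝ, s ∈ Set.Ioo (0 : ℝ) 1 →
      (X (p + s • (q - p))).1 * n.1 + (X (p + s • (q - p))).2 * n.2 ≠ 0)
    -- closed orbits surround `p` counterclockwise in a punctured neighborhood of `p`
    (hp : ∀ ε > (0 : ℝ), ∃ (γ : ℝ → ℝ × ℝ) (T : ℝ),
      IsPeriodicOrbit X γ T ∧ Set.range γ ⊆ Metric.ball p ε \ {p} ∧
      ∀ t : ℝ, 0 < cross2 (γ t - p) (X (γ t)))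
    -- closed orbits surround `q` in a punctured neighborhood of `q`
    (hq : ∀ ε > (0 : ℝ), ∃ (γ : ℝ → ℝ × ℝ) (T : ℝ),
      IsPeriodicOrbit X γ T ∧ Set.range γ ⊆ Metric.ball q ε \ {q} ∧
      ∀ t : ℝ, cross2 (γ t - q) (X (γ t)) ≠ 0) :
    -- then all sufficiently small closed orbits around `q` are clockwise
    ∃ ε₀ > (0 : ℝ), ∀ (γ : ℝ → ℝ × ℝ) (T : ℝ),
      IsPeriodicOrbit X γ T → Set.range γ ⊆ Metric.ball q ε₀ \ {q} →
      ∀ t : ℝ, cross2 (γ t - q) (X (γ t)) < 0 := by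
  have hDp : HasFDerivAt X (fderiv ℝ X p) p := (hX.differentiable one_ne_zero p).hasFDerivAt
  have hDq : HasFDerivAt X (fderiv ℝ X q) q := (hX.differentiable one_ne_zero q).hasFDerivAt
  have hsign_p := eventually_pos_cross2_of_trace2_eq_zero hDp hXp hdp <|
    trace2_eq_zero_of_periodicOrbit_near hDp hXp hdp fun ε hε =>
      let ⟨γ, T, hγ, hsub, _⟩ := hp ε hε; ⟨γ, T, hγ, hsub⟩
  have hsign_q := eventually_pos_cross2_of_trace2_eq_zero hDq hXq hdq <|
    trace2_eq_zero_of_periodicOrbit_near hDq hXq hdq fun ε hε =>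
      let ⟨γ, T, hγ, hsub, _⟩ := hq ε hε; ⟨γ, T, hγ, hsub⟩
  have hccw_p : ∀ᶠ w in 𝓝[≠] p, 0 < cross2 (w - p) (X w) := by
    obtain ⟨δ, hδ, hδp⟩ := nhdsWithin_basis_ball.eventually_iff.1 hsign_p
    obtain ⟨γ, T, -, hsub, hγ⟩ := hp δ hδ
    have hcp := pos_of_mul_pos_left (hδp (hsub ⟨0, rfl⟩)) (hγ 0).le
    exact hsign_p.mono fun w hw => pos_of_mul_pos_right hw hcp.le
  obtain ⟨w, hw_neg, hw_pos⟩ :=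
    ((frequently_cross2_neg_of_noContact hX.continuous hpq hperp hnc hccw_p).and_eventually
      hsign_q).exists
  have hcq := neg_of_mul_pos_left hw_pos hw_neg.le
  obtain ⟨ε, hε, hεq⟩ := nhdsWithin_basis_ball.eventually_iff.1 hsign_q
  exact ⟨ε, hε, fun γ T _ hsub t => neg_of_mul_pos_right (hεq (hsub ⟨t, rfl⟩)) hcq.le⟩

/-- Two nondegenerate singularities `p ≠ q` of a planar `C¹` vector field,
joined by a segment without contact (the scalar product of `X` with a unit
normal `n` of the line through `p` and `q` does not vanish on the open
segment), must be surrounded by closed orbits of opposite orientations: if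
the small closed orbits around `p` are counterclockwise, then the small
closed orbits around `q` are clockwise. -/
theorem stmt19 (X : ℝ × ℝ → ℝ × ℝ) (hX : ContDiff ℝ 1 X)
    (p q : ℝ × ℝ) (hpq : p ≠ q)
    (hXp : X p = 0) (hXq : X q = 0)
    (hdp : 0 < jacDet2 X p) (hdq : 0 < jacDet2 X q)
    (n : ℝ × ℝ) (hn : n.1 ^ 2 + n.2 ^ 2 = 1)
    (hperp : (q.1 - p.1) * n.1 + (q.2 - p.2) * n.2 = 0)
    (hnc : ∀ s : ℝ, s ∈ Set.Ioo (0 : ℝ) 1 →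
      (X (p + s • (q - p))).1 * n.1 + (X (p + s • (q - p))).2 * n.2 ≠ 0)
    -- closed orbits surround `p` counterclockwise in a punctured neighborhood of `p`
    (hp : ∀ ε > (0 : ℝ), ∃ (γ : ℝ → ℝ × ℝ) (T : ℝ),
      IsPeriodicOrbit X γ T ∧ Set.range γ ⊆ Metric.ball p ε \ {p} ∧
      ∀ t : ℝ, 0 < cross2 (γ t - p) (X (γ t)))
    -- closed orbits surround `q` in a punctured neighborhood of `q`
    (hq : ∀ ε > (0 : ℝ), ∃ (γ : ℝ → ℝ × ℝ) (T : ℝ),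
      IsPeriodicOrbit X γ T ∧ Set.range γ ⊆ Metric.ball q ε \ {q} ∧
      ∀ t : ℝ, cross2 (γ t - q) (X (γ t)) ≠ 0) :
    -- then all sufficiently small closed orbits around `q` are clockwise
    ∃ ε₀ > (0 : ℝ), ∀ (γ : ℝ → ℝ × ℝ) (T : ℝ),
      IsPeriodicOrbit X γ T → Set.range γ ⊆ Metric.ball q ε₀ \ {q} →
      ∀ t : ℝ, cross2 (γ t - q) (X (γ t)) < 0 :=
  stmt19_general X hX p q hpq hXp hXq hdp hdq n hperp hnc hp hq
end
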